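/- Let (G,p⁰) be a framework in ℝ^d that is infinitesimally rigid, and let ω⁰ be an equilibrium stress vector for (G,p⁰). Then for every ε > 0 there exists δ > 0 such that every configuration q : Fin n → ℝ^d with ‖q i − p⁰ i‖ < δ for all i and with (G,q) infinitesimally rigid admits an equilibrium stress vector ω with |ω e − ω⁰ e| < ε for every edge e of G. -/

import Mathlib

/-!
The stress map `S_q : ω ↦ (∑ⱼ ω_ij (q i - q j))ᵢ` is the adjoint of the rigidity map
`R_q : p' ↦ (⟪q i - q j, p' i - p' j⟫)_ij`, and `ω₀` lies in the kernel of `S_{p₀}`.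
Infinitesimal rigidity says that `ker R_{p₀}` consists of trivial flexes `p' i = S (p₀ i) + t`;
with the same `(S, t)` the formula `q ↦ S (q i) + t` gives trivial flexes of every `q`, which stay
linearly independent near `p₀`. Hence `dim ker R_q ≥ dim ker R_{p₀}`, i.e. `rank S_q ≤ rank S_{p₀}`
near `p₀`.

For a continuous family of linear maps whose rank does not jump up, kernels vary lower
semicontinuously: on a complement `W` of `ker S_{p₀}` the compressions of `S_q` are invertible
near `p₀`, with continuous inverse, and subtracting from `ω₀` the solution of the compressed
equation gives a kernel vector of `S_q` that tends to `ω₀`.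
-/

open scoped InnerProductSpace

/-- A configuration of `n` points in `ℝ^d`. -/
abbrev Config (n d : ℕ) := Fin n → EuclideanSpace ℝ (Fin d)

/-- An infinitesimal flex of the framework `(G,p)`. -/
def IsFlex {n d : ℕ} (G : SimpleGraph (Fin n)) (p p' : Config n d) : Prop :=
  ∀ i j, G.Adj i j → ⟪p i - p j, p' i - p' j⟫_ℝ = 0

/-- A trivial infinitesimal flex: `p' i = S (p i) + t` with `S` skew-symmetric. -/
def IsTrivialFlex {n d : ℕ} (p p' : Config n d) : Prop :=
  ∃ S : EuclideanSpace ℝ (Fin d) →ₗ[ℝ] EuclideanSpace ℝ (Fin d),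
    (∀ x y, ⟪S x, y⟫_ℝ = -⟪x, S y⟫_ℝ) ∧ ∃ t, ∀ i, p' i = S (p i) + t

/-- `(G,p)` is infinitesimally rigid in `ℝ^d` if every infinitesimal flex is trivial. -/
def InfinitesimallyRigid {n d : ℕ} (G : SimpleGraph (Fin n)) (p : Config n d) : Prop :=
  ∀ p', IsFlex G p p' → IsTrivialFlex p p'

open Classical in
/-- An equilibrium stress vector for `(G,p)`: an assignment of a real number to each
edge such that every vertex is in equilibrium. -/
def IsEquilibriumStressVector {n d : ℕ} (G : SimpleGraph (Fin n)) (p : Config n d)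
    (ω : Sym2 (Fin n) → ℝ) : Prop :=
  ∀ i, ∑ j, (if G.Adj i j then ω s(i, j) • (p i - p j) else 0) = 0

open Finset Module Filter Topology

section LinearAlgebra

variable {K E F : Type*} [Field K] [AddCommGroup E] [Module K E] [AddCommGroup F] [Module K F]

theorem LinearMap.exists_leftInverse_comp_subtype [FiniteDimensional K E] (f : E →ₗ[K] F) :
    ∃ (W : Submodule K E) (Φ : F →ₗ[K] W),
      Φ ∘ₗ f ∘ₗ W.subtype = LinearMap.id ∧ finrank K W = finrank K f.range := by
  obtain ⟨W, hW⟩ := f.ker.exists_isCompl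
  have hinj : (f ∘ₗ W.subtype).ker = ⊥ := by
    rw [LinearMap.ker_eq_bot']
    intro w hw
    simpa [hW.inf_eq_bot] using (show (w : E) ∈ f.ker ⊓ W from ⟨hw, w.2⟩)
  obtain ⟨Φ, hΦ⟩ := (f ∘ₗ W.subtype).exists_leftInverse_of_injective hinj
  refine ⟨W, Φ, hΦ, ?_⟩
  have := Submodule.finrank_add_eq_of_isCompl hW
  have := f.finrank_range_add_finrank_ker
  omega

theorem LinearMap.map_eq_zero_of_injective_comp [FiniteDimensional K F] {f : E →ₗ[K] F}
    {W : Submodule K E} {Φ : F →ₗ[K] W} (hinj : Function.Injective (Φ ∘ₗ f ∘ₗ W.subtype))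
    (hrank : finrank K f.range ≤ finrank K W) {v : E} (hv : Φ (f v) = 0) : f v = 0 := by
  have hrange : (f ∘ₗ W.subtype).range = f.range := by
    refine Submodule.eq_of_le_of_finrank_le (LinearMap.range_comp_le_range _ _) ?_
    rwa [LinearMap.finrank_range_of_inj (Function.Injective.of_comp hinj)]
  obtain ⟨w, hw⟩ : f v ∈ (f ∘ₗ W.subtype).range := hrange ▸ LinearMap.mem_range_self f v
  have hw₀ : w = 0 := hinj <| by
    change Φ (f w) = Φ (f (W.subtype 0))
    rw [map_zero, map_zero, map_zero, ← hv]
    exact congrArg Φ hw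
  rw [← hw, hw₀, map_zero]

end LinearAlgebra

section Kernels

variable {𝕜 X E F : Type*} [NontriviallyNormedField 𝕜] [CompleteSpace 𝕜] [TopologicalSpace X]
  [NormedAddCommGroup E] [NormedSpace 𝕜 E] [FiniteDimensional 𝕜 E]
  [NormedAddCommGroup F] [NormedSpace 𝕜 F] [FiniteDimensional 𝕜 F]

theorem exists_tendsto_mem_ker {B : X → E →ₗ[𝕜] F} {x₀ : X}
    (hB : ∀ y, ContinuousAt (fun x => B x y) x₀)
    (hrank : ∀ᶠ x in 𝓝 x₀, finrank 𝕜 (B x).range ≤ finrank 𝕜 (B x₀).range)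
    {y : E} (hy : B x₀ y = 0) :
    ∃ z : X → E, Tendsto z (𝓝 x₀) (𝓝 y) ∧ ∀ᶠ x in 𝓝 x₀, B x (z x) = 0 := by
  obtain ⟨W, Φ, hΦ, hW⟩ := (B x₀).exists_leftInverse_comp_subtype
  have : CompleteSpace W := FiniteDimensional.complete 𝕜 W
  have hΦc : Continuous Φ := Φ.continuous_of_finiteDimensional
  set A : X → W →L[𝕜] W := fun x => LinearMap.toContinuousLinearMap (Φ ∘ₗ B x ∘ₗ W.subtype)
  have hA₀ : A x₀ = 1 := by
    ext1 w
    exact LinearMap.congr_fun hΦ w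
  have hA : ContinuousAt A x₀ := continuousAt_clm_apply.2 fun w => hΦc.continuousAt.comp (hB w)
  refine ⟨fun x => y - W.subtype (Ring.inverse (A x) (Φ (B x y))), ?_, ?_⟩
  · have hinv : ContinuousAt (fun x => Ring.inverse (A x)) x₀ := by
      have := NormedRing.inverse_continuousAt (1 : (W →L[𝕜] W)ˣ)
      rw [Units.val_one, ← hA₀] at this
      exact this.comp hA
    have : ContinuousAt (fun x => y - W.subtype (Ring.inverse (A x) (Φ (B x y)))) x₀ :=
      continuousAt_const.sub (W.subtypeL.continuous.continuousAt.comp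
        (hinv.clm_apply (hΦc.continuousAt.comp (hB y))))
    simpa [hy] using this.tendsto
  · have hunit : ∀ᶠ x in 𝓝 x₀, IsUnit (A x) :=
      hA.eventually (Units.isOpen.mem_nhds (by simp [hA₀]))
    filter_upwards [hrank, hunit] with x hx hAx
    have hAinj : Function.Injective (A x) :=
      Function.LeftInverse.injective (g := ⇑(Ring.inverse (A x))) fun w => by
        rw [← mul_apply_eq_comp, Ring.inverse_mul_cancel _ hAx, one_apply_eq_self]
    refine (B x).map_eq_zero_of_injective_comp hAinj (hW ▸ hx) ?_
    rw [map_sub, map_sub]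
    change Φ (B x y) - A x (Ring.inverse (A x) (Φ (B x y))) = 0
    rw [← mul_apply_eq_comp, Ring.mul_inverse_cancel _ hAx, one_apply_eq_self, sub_self]

end Kernels

theorem IsTrivialFlex.isFlex {n d : ℕ} {G : SimpleGraph (Fin n)} {p p' : Config n d}
    (h : IsTrivialFlex p p') : IsFlex G p p' := by
  obtain ⟨S, hS, t, ht⟩ := h
  intro i j _
  have hskew := hS (p i - p j) (p i - p j)
  rw [ht, ht, add_sub_add_right_eq_sub, ← map_sub]
  linarith [real_inner_comm (p i - p j) (S (p i - p j))]

section Framework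

variable {n d : ℕ}

-- `Config n d` carries the sup norm; motions get the L² inner product, so that the stress map
-- below is the adjoint of the rigidity map.
abbrev Motion (n d : ℕ) := PiLp 2 fun _ : Fin n => EuclideanSpace ℝ (Fin d)

-- Stresses indexed by ordered pairs; only the sums `ω (i, j) + ω (j, i)` over edges matter.
abbrev PairStress (n : ℕ) := EuclideanSpace ℝ (Fin n × Fin n)

section

variable (G : SimpleGraph (Fin n)) [DecidableRel G.Adj] (q : Config n d)

noncomputable def rigidityMap : Motion n d →ₗ[ℝ] PairStress n where
  toFun p' := WithLp.toLp 2 fun ij =>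
    if G.Adj ij.1 ij.2 then ⟪q ij.1 - q ij.2, p' ij.1 - p' ij.2⟫_ℝ else 0
  map_add' p' p'' := by
    ext ij
    by_cases h : G.Adj ij.1 ij.2 <;> simp [h, add_sub_add_comm, inner_add_right]
  map_smul' c p' := by
    ext ij
    by_cases h : G.Adj ij.1 ij.2 <;> simp [h, ← smul_sub, inner_smul_right]

noncomputable def stressMap : PairStress n →ₗ[ℝ] Motion n d where
  toFun ω := WithLp.toLp 2 fun i =>
    ∑ j, if G.Adj i j then (ω (i, j) + ω (j, i)) • (q i - q j) else 0
  map_add' ω ω' := by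
    ext i : 1
    simp only [PiLp.add_apply, ← sum_add_distrib]
    refine sum_congr rfl fun j _ => ?_
    split_ifs <;> simp [add_smul, add_add_add_comm]
  map_smul' c ω := by
    ext i : 1
    simp only [PiLp.smul_apply, smul_sum]
    refine sum_congr rfl fun j _ => ?_
    split_ifs <;> simp [add_smul, smul_smul]

theorem rigidityMap_apply (p' : Motion n d) (i j : Fin n) :
    rigidityMap G q p' (i, j) = if G.Adj i j then ⟪q i - q j, p' i - p' j⟫_ℝ else 0 := rfl

theorem stressMap_apply (ω : PairStress n) (i : Fin n) :
    stressMap G q ω i = ∑ j, if G.Adj i j then (ω (i, j) + ω (j, i)) • (q i - q j) else 0 := rfl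

theorem inner_stressMap (ω : PairStress n) (p' : Motion n d) :
    ⟪stressMap G q ω, p'⟫_ℝ = ⟪ω, rigidityMap G q p'⟫_ℝ := by
  have swap : ∑ i, ∑ j, (if G.Adj i j then ω (i, j) * ⟪q i - q j, p' j⟫_ℝ else 0) =
      -∑ i, ∑ j, if G.Adj i j then ω (j, i) * ⟪q i - q j, p' i⟫_ℝ else 0 := by
    rw [sum_comm, ← sum_neg_distrib]
    refine sum_congr rfl fun i _ => ?_
    rw [← sum_neg_distrib]
    refine sum_congr rfl fun j _ => ?_
    by_cases h : G.Adj i j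
    · rw [if_pos h.symm, if_pos h, ← neg_sub (q i), inner_neg_left, mul_neg]
    · rw [if_neg (mt G.adj_symm h), if_neg h, neg_zero]
  calc ⟪stressMap G q ω, p'⟫_ℝ
      = ∑ i, ∑ j, if G.Adj i j then (ω (i, j) + ω (j, i)) * ⟪q i - q j, p' i⟫_ℝ else 0 := by
        rw [PiLp.inner_apply]
        refine sum_congr rfl fun i _ => ?_
        rw [stressMap_apply, sum_inner]
        refine sum_congr rfl fun j _ => ?_
        split_ifs <;> simp [real_inner_smul_left]
    _ = (∑ i, ∑ j, if G.Adj i j then ω (i, j) * ⟪q i - q j, p' i⟫_ℝ else 0) +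
          ∑ i, ∑ j, if G.Adj i j then ω (j, i) * ⟪q i - q j, p' i⟫_ℝ else 0 := by
        simp only [← sum_add_distrib]
        refine sum_congr rfl fun i _ => sum_congr rfl fun j _ => ?_
        split_ifs <;> ring
    _ = (∑ i, ∑ j, if G.Adj i j then ω (i, j) * ⟪q i - q j, p' i⟫_ℝ else 0) -
          ∑ i, ∑ j, if G.Adj i j then ω (i, j) * ⟪q i - q j, p' j⟫_ℝ else 0 := by
        rw [swap, sub_neg_eq_add]
    _ = ∑ i, ∑ j, if G.Adj i j then ω (i, j) * ⟪q i - q j, p' i - p' j⟫_ℝ else 0 := by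
        simp only [← sum_sub_distrib]
        refine sum_congr rfl fun i _ => sum_congr rfl fun j _ => ?_
        split_ifs <;> simp [inner_sub_right, mul_sub]
    _ = ⟪ω, rigidityMap G q p'⟫_ℝ := by
        rw [PiLp.inner_apply, Fintype.sum_prod_type]
        refine sum_congr rfl fun i _ => sum_congr rfl fun j _ => ?_
        rw [rigidityMap_apply]
        split_ifs <;> simp [mul_comm]

theorem stressMap_eq_adjoint : stressMap G q = (rigidityMap G q).adjoint :=
  (LinearMap.eq_adjoint_iff _ _).2 (inner_stressMap G q)

theorem finrank_range_stressMap :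
    finrank ℝ (stressMap G q).range = finrank ℝ (rigidityMap G q).range := by
  rw [stressMap_eq_adjoint, LinearMap.finrank_range_adjoint]

theorem mem_ker_rigidityMap_iff (p' : Motion n d) :
    p' ∈ (rigidityMap G q).ker ↔ IsFlex G q p' := by
  simp only [LinearMap.mem_ker, IsFlex]
  constructor
  · intro h i j hij
    simpa [rigidityMap_apply, hij] using congr($h (i, j))
  · intro h
    ext ⟨i, j⟩
    by_cases hij : G.Adj i j <;> simp [rigidityMap_apply, hij, h i j]

theorem continuous_stressMap_apply (ω : PairStress n) :
    Continuous fun q : Config n d => stressMap G q ω := by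
  change Continuous fun q : Config n d => WithLp.toLp 2 fun i =>
    ∑ j, if G.Adj i j then (ω (i, j) + ω (j, i)) • (q i - q j) else 0
  refine (PiLp.continuous_toLp _ _).comp
    (continuous_pi fun i => continuous_finsetSum _ fun j _ => ?_)
  split_ifs <;> fun_prop

end

section

variable {G : SimpleGraph (Fin n)} [DecidableRel G.Adj] {p₀ : Config n d}

theorem eventually_finrank_ker_rigidityMap_le (hIR : InfinitesimallyRigid G p₀) :
    ∀ᶠ q in 𝓝 p₀, finrank ℝ (rigidityMap G p₀).ker ≤ finrank ℝ (rigidityMap G q).ker := by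
  set K := (rigidityMap G p₀).ker
  let b := finBasis ℝ K
  choose S hS t ht using fun k => hIR _ ((mem_ker_rigidityMap_iff G p₀ (b k)).1 (b k).2)
  let f : Config n d → Fin (finrank ℝ K) → Motion n d :=
    fun q k => WithLp.toLp 2 fun i => S k (q i) + t k
  have hf₀ : f p₀ = fun k => (b k : Motion n d) := by
    funext k
    ext1 i
    exact (ht k i).symm
  have hf : Continuous f := by fun_prop
  have hli : ∀ᶠ q in 𝓝 p₀, LinearIndependent ℝ (f q) := by
    have h₀ : ∀ᶠ g in 𝓝 (f p₀), LinearIndependent ℝ g := by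
      rw [hf₀]
      exact (b.linearIndependent.map' K.subtype K.ker_subtype).eventually
    exact (hf.tendsto p₀).eventually h₀
  filter_upwards [hli] with q hq
  have hmem : ∀ k, f q k ∈ (rigidityMap G q).ker := fun k =>
    (mem_ker_rigidityMap_iff G q _).2 (IsTrivialFlex.isFlex ⟨S k, hS k, t k, fun _ => rfl⟩)
  have hli' : LinearIndependent ℝ fun k => (⟨f q k, hmem k⟩ : (rigidityMap G q).ker) :=
    LinearIndependent.of_comp (rigidityMap G q).ker.subtype hq
  simpa only [Fintype.card_fin] using hli'.fintype_card_le_finrank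

theorem eventually_finrank_range_stressMap_le (hIR : InfinitesimallyRigid G p₀) :
    ∀ᶠ q in 𝓝 p₀, finrank ℝ (stressMap G q).range ≤ finrank ℝ (stressMap G p₀).range := by
  filter_upwards [eventually_finrank_ker_rigidityMap_le hIR] with q hq
  have h₀ := (rigidityMap G p₀).finrank_range_add_finrank_ker
  have h := (rigidityMap G q).finrank_range_add_finrank_ker
  rw [finrank_range_stressMap, finrank_range_stressMap]
  omega

end

def edgeStress (ω : PairStress n) : Sym2 (Fin n) → ℝ :=
  Sym2.lift ⟨fun i j => ω (i, j) + ω (j, i), fun _ _ => add_comm _ _⟩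

theorem edgeStress_mk (ω : PairStress n) (i j : Fin n) :
    edgeStress ω s(i, j) = ω (i, j) + ω (j, i) := rfl

theorem abs_edgeStress_sub_le (ω ω' : PairStress n) (e : Sym2 (Fin n)) :
    |edgeStress ω e - edgeStress ω' e| ≤ 2 * ‖ω - ω'‖ := by
  induction e using Sym2.ind with
  | _ i j =>
    have h : ∀ ij, |ω ij - ω' ij| ≤ ‖ω - ω'‖ := fun ij => by
      simpa using PiLp.norm_apply_le (ω - ω') ij
    rw [edgeStress_mk, edgeStress_mk, add_sub_add_comm, two_mul]
    exact (abs_add_le _ _).trans (add_le_add (h _) (h _))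

theorem isEquilibriumStressVector_edgeStress_iff (G : SimpleGraph (Fin n)) [DecidableRel G.Adj]
    (q : Config n d) (ω : PairStress n) :
    IsEquilibriumStressVector G q (edgeStress ω) ↔ stressMap G q ω = 0 := by
  rw [IsEquilibriumStressVector, WithLp.ext_iff, funext_iff]
  refine forall_congr' fun i => ?_
  rw [stressMap_apply, WithLp.ofLp_zero, Pi.zero_apply]
  -- `IsEquilibriumStressVector` decides adjacency classically; `congr!` identifies the instances.
  congr!

noncomputable def halfStress (ω : Sym2 (Fin n) → ℝ) : PairStress n :=
  WithLp.toLp 2 fun ij => ω s(ij.1, ij.2) / 2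

theorem edgeStress_halfStress (ω : Sym2 (Fin n) → ℝ) : edgeStress (halfStress ω) = ω := by
  funext e
  induction e using Sym2.ind with
  | _ i j => simp [edgeStress_mk, halfStress, Sym2.eq_swap]

end Framework

/-- Nearby infinitesimally rigid frameworks have nearby equilibrium stress vectors. -/
theorem nearby_equilibrium_stress (n d : ℕ) (G : SimpleGraph (Fin n))
    (p₀ : Config n d) (hIR : InfinitesimallyRigid G p₀)
    (ω₀ : Sym2 (Fin n) → ℝ) (hω₀ : IsEquilibriumStressVector G p₀ ω₀) :
    ∀ ε > (0 : ℝ), ∃ δ > (0 : ℝ), ∀ q : Config n d,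
      (∀ i, ‖q i - p₀ i‖ < δ) → InfinitesimallyRigid G q →
      ∃ ω : Sym2 (Fin n) → ℝ, IsEquilibriumStressVector G q ω ∧
        ∀ e ∈ G.edgeSet, |ω e - ω₀ e| < ε := by
  classical
  intro ε hε
  have hω₀' : stressMap G p₀ (halfStress ω₀) = 0 := by
    rwa [← isEquilibriumStressVector_edgeStress_iff, edgeStress_halfStress]
  obtain ⟨z, hz, hker⟩ := exists_tendsto_mem_ker
    (fun ω => (continuous_stressMap_apply G ω).continuousAt)
    (eventually_finrank_range_stressMap_le hIR) hω₀'
  have hclose : ∀ᶠ q in 𝓝 p₀, ‖z q - halfStress ω₀‖ < ε / 2 :=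
    (tendsto_iff_norm_sub_tendsto_zero.1 hz).eventually (gt_mem_nhds (half_pos hε))
  obtain ⟨δ, hδ, hball⟩ := Metric.eventually_nhds_iff.1 (hker.and hclose)
  refine ⟨δ, hδ, fun q hq _ => ?_⟩
  obtain ⟨hzq, hzε⟩ := hball (y := q) <|
    (dist_pi_lt_iff hδ).2 fun i => by rw [dist_eq_norm]; exact hq i
  refine ⟨edgeStress (z q), (isEquilibriumStressVector_edgeStress_iff G q _).2 hzq, fun e _ => ?_⟩
  calc |edgeStress (z q) e - ω₀ e|
      = |edgeStress (z q) e - edgeStress (halfStress ω₀) e| := by rw [edgeStress_halfStress]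
    _ ≤ 2 * ‖z q - halfStress ω₀‖ := abs_edgeStress_sub_le _ _ e
    _ < ε := by linarith
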